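/- Fix d ≥ 2, λ ∈ (0,1) and 0 < p_1 < p_2 ≤ 1, and let μ_1, μ_2 be the laws of the edge configuration σ ∈ {0,1}^{E^d} under ℙ_{p_1,λ,d} and ℙ_{p_2,λ,d} respectively. Then there is no coupling of μ_1 and μ_2 (no probability measure on {0,1}^{E^d} × {0,1}^{E^d} with marginals μ_1 and μ_2) concentrated on the set {(σ_1,σ_2) : σ_1(e) ≤ σ_2(e) for all edges e}, and likewise none concentrated on {(σ_1,σ_2) : σ_2(e) ≤ σ_1(e) for all edges e}. -/

import Mathlib

open MeasureTheory ENNReal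

namespace AlignmentPercolation

/-- Sites of the lattice `ℤ^d`. -/
abbrev Site (d : ℕ) := Fin d → ℤ

/-- A site configuration: `true` means occupied. -/
abbrev SiteCfg (d : ℕ) := Site d → Bool

/-- Labels (open/closed) attached to (potential) segments, indexed by their ordered
pair of endpoints. -/
abbrev PairLabels (d : ℕ) := Site d × Site d → Bool

/-- A configuration of the independent alignment percolation model: a site
configuration together with independent labels for the segments. -/
abbrev Cfg (d : ℕ) := SiteCfg d × PairLabels d

/-- Nearest-neighbour edges of `ℤ^d`, indexed by their lower endpoint and direction:
`(u, i)` is the edge from `u` to `u + e_i`. -/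
abbrev EdgeIdx (d : ℕ) := Site d × Fin d

/-- The point obtained from `u` by replacing its `i`-th coordinate with `a`. -/
def seg {d : ℕ} (u : Site d) (i : Fin d) (a : ℤ) : Site d := Function.update u i a

/-- The point `u + e_i`. -/
def up {d : ℕ} (u : Site d) (i : Fin d) : Site d := seg u i (u i + 1)

/-- The skewed doubling map underlying the construction of an i.i.d.
Bernoulli(p) sequence from a single uniform random variable on `[0,1)`. -/
noncomputable def bernShift (p : ℝ) (x : ℝ) : ℝ :=
  if x < p then x / p else (x - p) / (1 - p)

open scoped Classical in
noncomputable def bernDigit (p : ℝ) (x : ℝ) : Bool := if x < p then true else false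

/-- The sequence of skewed binary digits of `x`; under the uniform distribution on
`[0,1)` this is an i.i.d. Bernoulli(p) sequence. -/
noncomputable def bernDigits (p : ℝ) (x : ℝ) : ℕ → Bool :=
  fun n => bernDigit p ((bernShift p)^[n] x)

/-- The i.i.d. Bernoulli(p) product probability measure on `ι → Bool`, for a countable
index type `ι`: the law of the family of skewed binary digits (indexed through an
injection `ι ↪ ℕ`) of a uniform random variable on `[0,1)`. Each coordinate is `true`
with probability `p` (with the convention that `p` is clamped to `[0,1]`). -/
noncomputable def iidBool (ι : Type*) [Countable ι] (p : ℝ) : Measure (ι → Bool) :=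
  Measure.map (fun f (i : ι) => f ((Countable.exists_injective_nat ι).choose i))
    (Measure.map (bernDigits p) (volume.restrict (Set.Ico (0 : ℝ) 1)))

/-- The law `ℙ_{p,λ,d}` of the independent alignment percolation model: sites are
occupied independently with probability `p`, and independently every potential
segment carries an independent Bernoulli(λ) label. -/
noncomputable def alignMeasure (d : ℕ) (p lam : ℝ) : Measure (Cfg d) :=
  (iidBool (Site d) p).prod (iidBool (Site d × Site d) lam)

/-- `(v, w)` is a feasible pair of the site configuration `ω` (ordered so that the
coordinate where they differ increases): `v` and `w` differ in exactly one
coordinate, are both occupied, and no site strictly between them is occupied. -/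
def FeasiblePair {d : ℕ} (ω : SiteCfg d) (v w : Site d) : Prop :=
  ∃ i : Fin d, (∀ j, j ≠ i → v j = w j) ∧ v i < w i ∧
    ω v = true ∧ ω w = true ∧ ∀ c : ℤ, v i < c → c < w i → ω (seg v i c) = false

/-- The edge `e` lies on the axis-parallel segment with endpoints `v` and `w`. -/
def EdgeOnSeg {d : ℕ} (e : EdgeIdx d) (v w : Site d) : Prop :=
  ∃ a b : ℤ, a ≤ e.1 e.2 ∧ e.1 e.2 < b ∧ v = seg e.1 e.2 a ∧ w = seg e.1 e.2 b

/-- The edge `e` is open in the configuration `ξ`: it lies on the segment of a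
feasible pair whose label is open. -/
def EdgeOpen {d : ℕ} (ξ : Cfg d) (e : EdgeIdx d) : Prop :=
  ∃ v w : Site d, FeasiblePair ξ.1 v w ∧ EdgeOnSeg e v w ∧ ξ.2 (v, w) = true

/-- The induced edge configuration `σ ∈ {0,1}^{E^d}` (as a `Bool`). -/
noncomputable def edgeState {d : ℕ} (ξ : Cfg d) (e : EdgeIdx d) : Bool :=
  @decide (EdgeOpen ξ e) (Classical.propDecidable _)

/-- The graph on `ℤ^d` whose edges are the open edges of the configuration `ξ`. -/
def openGraph {d : ℕ} (ξ : Cfg d) : SimpleGraph (Site d) where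
  Adj u v := ∃ i, (v = up u i ∧ EdgeOpen ξ (u, i)) ∨ (u = up v i ∧ EdgeOpen ξ (v, i))
  symm := by constructor; rintro u v ⟨i, h | h⟩; exacts [⟨i, Or.inr h⟩, ⟨i, Or.inl h⟩]
  loopless := by
    constructor
    rintro u ⟨i, ⟨h, -⟩ | ⟨h, -⟩⟩ <;>
    · have := congrFun h i
      simp [up, seg] at this

/-- The site `v` lies in an infinite connected component of open edges. -/
def PercolatesFrom {d : ℕ} (ξ : Cfg d) (v : Site d) : Prop :=
  {w | (openGraph ξ).Reachable v w}.Infinite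

/-- The set `𝒪` of open edges percolates. -/
def Percolates {d : ℕ} (ξ : Cfg d) : Prop := ∃ v, PercolatesFrom ξ v

/-- `θ(p,λ,d)`: the probability that the origin lies in an infinite open cluster. -/
noncomputable def theta (d : ℕ) (p lam : ℝ) : ℝ≥0∞ :=
  alignMeasure d p lam {ξ | PercolatesFrom ξ 0}

/-- `ℙ_{p,λ,d}(𝒪 percolates)`. -/
noncomputable def percProb (d : ℕ) (p lam : ℝ) : ℝ≥0∞ :=
  alignMeasure d p lam {ξ | Percolates ξ}

/-- The critical segment parameter `λ_c(p,d) = sup {λ ≥ 0 : θ(p,λ,d) = 0}`. -/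
noncomputable def lambdaC (d : ℕ) (p : ℝ) : ℝ :=
  sSup {lam : ℝ | 0 ≤ lam ∧ theta d p lam = 0}

/-- A configuration of Bernoulli bond percolation on `ℤ^d`. -/
abbrev BondCfg (d : ℕ) := EdgeIdx d → Bool

/-- Independent Bernoulli(λ) bond percolation on `ℤ^d`. -/
noncomputable def bondMeasure (d : ℕ) (lam : ℝ) : Measure (BondCfg d) :=
  iidBool (EdgeIdx d) lam

/-- The graph of open bonds of a bond configuration. -/
def bondGraph {d : ℕ} (σ : BondCfg d) : SimpleGraph (Site d) where
  Adj u v := ∃ i, (v = up u i ∧ σ (u, i) = true) ∨ (u = up v i ∧ σ (v, i) = true)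
  symm := by constructor; rintro u v ⟨i, h | h⟩; exacts [⟨i, Or.inr h⟩, ⟨i, Or.inl h⟩]
  loopless := by
    constructor
    rintro u ⟨i, ⟨h, -⟩ | ⟨h, -⟩⟩ <;>
    · have := congrFun h i
      simp [up, seg] at this

/-- The percolation function of Bernoulli bond percolation on `ℤ^d`. -/
noncomputable def thetaBond (d : ℕ) (lam : ℝ) : ℝ≥0∞ :=
  bondMeasure d lam {σ | {w | (bondGraph σ).Reachable 0 w}.Infinite}

/-- The critical parameter `p_c^bond(d)` of Bernoulli bond percolation on `ℤ^d`. -/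
noncomputable def pcBond (d : ℕ) : ℝ :=
  sSup {lam : ℝ | 0 ≤ lam ∧ thetaBond d lam = 0}

/-- The (closed) sup-norm box `B(x,L)` in `ℤ^d`. -/
def box (d : ℕ) (x : Site d) (L : ℝ) : Set (Site d) :=
  {z | ∀ i, |((z i - x i : ℤ) : ℝ)| ≤ L}

/-- The sphere `∂B(x,L) = {z : ‖z - x‖_∞ = ⌊L⌋}` in `ℤ^d`. -/
def sphere (d : ℕ) (x : Site d) (L : ℝ) : Set (Site d) :=
  {z | (∀ i, |z i - x i| ≤ ⌊L⌋) ∧ ∃ i, |z i - x i| = ⌊L⌋}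

/-- The sup-norm distance `‖x - y‖_∞` on `ℤ^d` (as a natural number). -/
def supDist {d : ℕ} (x y : Site d) : ℕ :=
  Finset.univ.sup fun i => (x i - y i).natAbs

/-- The sequence of scales: `L 0 = 10^4` and `L (k+1) = (L k)^(3/2)`. -/
noncomputable def Lscale : ℕ → ℝ
  | 0 => 10 ^ 4
  | k + 1 => Lscale k ^ ((3 : ℝ) / 2)

/-- `α(p) = -log (1-p)`. -/
noncomputable def alphaP (p : ℝ) : ℝ := - Real.log (1 - p)

/-- The edge `e` has both endpoints in `B`. -/
def EdgeIn {d : ℕ} (B : Set (Site d)) (e : EdgeIdx d) : Prop :=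
  e.1 ∈ B ∧ up e.1 e.2 ∈ B

/-- The event `A` is supported on the edges of `B`: it is measurable with respect to
the σ-algebra generated by the states of the edges with both endpoints in `B`. -/
def SupportedOnEdges {d : ℕ} (B : Set (Site d)) (A : Set (Cfg d)) : Prop :=
  MeasurableSet[MeasurableSpace.comap
    (fun ξ (e : {e : EdgeIdx d // EdgeIn B e}) => edgeState ξ e.1) inferInstance] A

/-- `S` is a set of points of `T` whose `L`-boxes cover `T`. -/
def IsCover (d : ℕ) (T : Set (Site d)) (L : ℝ) (S : Finset (Site d)) : Prop :=
  ↑S ⊆ T ∧ T ⊆ ⋃ x ∈ S, box d x L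

/-- `S` is a cover of `T` by `L`-boxes centred in `T`, of minimal cardinality. -/
def IsMinCover (d : ℕ) (T : Set (Site d)) (L : ℝ) (S : Finset (Site d)) : Prop :=
  IsCover d T L S ∧ ∀ S' : Finset (Site d), IsCover d T L S' → S.card ≤ S'.card


/-- The law of the edge configuration `σ ∈ {0,1}^{E^d}` under `ℙ_{p,λ,d}`. -/
noncomputable def edgeLaw (d : ℕ) (p lam : ℝ) : Measure (BondCfg d) :=
  (alignMeasure d p lam).map (fun ξ (e : EdgeIdx d) => edgeState ξ e)

/-!
Look at two adjacent edges `{0, e₁}` and `{e₁, 2e₁}` on a coordinate axis. For `p > 0` the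
segment through an edge is almost surely a feasible pair, whose label is an independent
Bernoulli(`λ`) variable, so each edge is open with probability `λ`, whatever `p` is. Both edges
are open iff either `e₁` is occupied and the two segments ending there are open (probability
`pλ²`), or `e₁` is empty and the one segment across it is open (probability `(1 - p)λ`). Hence
`P(both open) = λ - pλ(1 - λ)` strictly decreases in `p`, while by inclusion-exclusion
`P(at least one open) = λ + pλ(1 - λ)` strictly increases. Both events are increasing, so a
coupling with `σ₁ ≤ σ₂` would contradict the first fact and one with `σ₂ ≤ σ₁` the second.
-/

open ProbabilityTheory unitInterval Set Function
open MeasureTheory.Measure (infinitePi eq_infinitePi infinitePi_pi)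

section BernoulliDigits

lemma measurable_bernShift (p : ℝ) : Measurable (bernShift p) :=
  Measurable.ite (measurableSet_lt measurable_id measurable_const)
    (measurable_id.div_const p) ((measurable_id.sub_const p).div_const (1 - p))

lemma measurable_bernDigit (p : ℝ) : Measurable (bernDigit p) :=
  Measurable.ite (measurableSet_lt measurable_id measurable_const) measurable_const measurable_const

lemma measurable_bernDigits (p : ℝ) : Measurable (bernDigits p) :=
  measurable_pi_lambda _ fun n => (measurable_bernDigit p).comp ((measurable_bernShift p).iterate n)

lemma bernDigits_succ (p x : ℝ) (n : ℕ) :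
    bernDigits p x (n + 1) = bernDigits p (bernShift p x) n := by
  simp only [bernDigits, iterate_succ_apply]

lemma volume_preimage_inter_Ico_of_eqOn_affine {a b : ℝ} (hab : a ≤ b) {g : ℝ → ℝ}
    (hg : EqOn g (fun x => (x - a) / (b - a)) (Ico a b)) (S : Set ℝ) :
    volume (g ⁻¹' S ∩ Ico a b) = ENNReal.ofReal (b - a) * volume (S ∩ Ico 0 1) := by
  rcases hab.eq_or_lt with rfl | hab
  · simp
  have hba : 0 < b - a := sub_pos.mpr hab
  have hIco : ∀ x, x ∈ Ico a b ↔ (x - a) / (b - a) ∈ Ico 0 1 := fun x => by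
    rw [mem_Ico, mem_Ico, div_nonneg_iff, div_lt_one hba]
    constructor
    · rintro ⟨h1, h2⟩
      exact ⟨Or.inl ⟨by linarith, hba.le⟩, by linarith⟩
    · rintro ⟨h1 | h1, h2⟩ <;> constructor <;> linarith [h1.1, h1.2]
  have hset : g ⁻¹' S ∩ Ico a b =
      (fun x => x + -a) ⁻¹' ((fun y => (b - a)⁻¹ * y) ⁻¹' (S ∩ Ico 0 1)) := by
    ext x
    simp only [mem_inter_iff, mem_preimage, ← sub_eq_add_neg, ← div_eq_inv_mul, ← hIco]
    exact and_congr_left fun hx => by rw [hg hx]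
  rw [hset, measure_preimage_add_right, Real.volume_preimage_mul_left (inv_ne_zero hba.ne'),
    inv_inv, abs_of_pos hba]

variable (p : I)

lemma bernoulliMeasure_bool_apply (T : Set Bool) :
    Ber(true, false, p) T =
      ENNReal.ofReal p * T.indicator 1 true + ENNReal.ofReal (1 - p) * T.indicator 1 false := by
  have hp : ENNReal.ofReal p = toNNReal p := ENNReal.ofReal_coe_nnreal (p := toNNReal p)
  have hq : ENNReal.ofReal (1 - p) = toNNReal (σ p) :=
    ENNReal.ofReal_coe_nnreal (p := toNNReal (σ p))
  rw [hp, hq]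
  simp only [bernoulliMeasure_def, Measure.add_apply, Measure.smul_apply,
    Measure.dirac_apply' _ (MeasurableSet.of_discrete), ENNReal.smul_def, smul_eq_mul]

lemma volume_bernDigit_inter_bernShift_inter_Ico {a b : ℝ} (hab : a ≤ b) {β : Bool}
    (hd : ∀ x ∈ Ico a b, bernDigit p x = β)
    (hs : EqOn (bernShift p) (fun x => (x - a) / (b - a)) (Ico a b)) (T : Set Bool) (S : Set ℝ) :
    volume (bernDigit p ⁻¹' T ∩ bernShift p ⁻¹' S ∩ Ico a b) =
      T.indicator 1 β * (ENNReal.ofReal (b - a) * volume (S ∩ Ico 0 1)) := by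
  by_cases hβ : β ∈ T
  · rw [indicator_of_mem hβ, Pi.one_apply, one_mul,
      ← volume_preimage_inter_Ico_of_eqOn_affine hab hs]
    congr 1
    ext x
    simp only [mem_inter_iff, mem_preimage]
    exact ⟨fun h => ⟨h.1.2, h.2⟩, fun h => ⟨⟨(hd x h.2).symm ▸ hβ, h.1⟩, h.2⟩⟩
  · rw [indicator_of_notMem hβ, zero_mul, measure_eq_zero_iff_ae_notMem.mpr]
    exact Filter.Eventually.of_forall fun x hx => hβ (hd x hx.2 ▸ hx.1.1)

lemma volume_bernDigit_inter_bernShift (T : Set Bool) {S : Set ℝ} (hS : MeasurableSet S) :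
    volume.restrict (Ico 0 1) (bernDigit p ⁻¹' T ∩ bernShift p ⁻¹' S) =
      Ber(true, false, p) T * volume.restrict (Ico 0 1) S := by
  have hdisj : Disjoint (Ico (0 : ℝ) p) (Ico (p : ℝ) 1) := Ico_disjoint_Ico_same
  have hmeas : MeasurableSet (bernDigit p ⁻¹' T ∩ bernShift p ⁻¹' S) :=
    measurable_bernDigit p MeasurableSet.of_discrete |>.inter (measurable_bernShift p hS)
  rw [Measure.restrict_apply' measurableSet_Ico, Measure.restrict_apply' measurableSet_Ico,
    ← Ico_union_Ico_eq_Ico p.2.1 p.2.2, inter_union_distrib_left,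
    measure_union (hdisj.mono inter_subset_right inter_subset_right)
      (hmeas.inter measurableSet_Ico),
    volume_bernDigit_inter_bernShift_inter_Ico p p.2.1 (β := true) (fun x hx => if_pos hx.2)
      (fun x hx => by simp [bernShift, hx.2]),
    volume_bernDigit_inter_bernShift_inter_Ico p p.2.2 (β := false)
      (fun x hx => if_neg (not_lt.mpr hx.1)) (fun x hx => if_neg (not_lt.mpr hx.1)),
    Ico_union_Ico_eq_Ico p.2.1 p.2.2, bernoulliMeasure_bool_apply, sub_zero]
  ring

lemma volume_bernDigits_preimage_pi_range (N : ℕ) (t : ℕ → Set Bool) :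
    volume.restrict (Ico 0 1) (bernDigits p ⁻¹' Set.pi ↑(Finset.range N) t) =
      ∏ n ∈ Finset.range N, Ber(true, false, p) (t n) := by
  induction N generalizing t with
  | zero => simp
  | succ N ih =>
    have hpre : bernDigits p ⁻¹' Set.pi ↑(Finset.range (N + 1)) t =
        bernDigit p ⁻¹' t 0 ∩
          bernShift p ⁻¹' (bernDigits p ⁻¹' Set.pi ↑(Finset.range N) fun n => t (n + 1)) := by
      ext x
      simp only [mem_preimage, mem_pi, Finset.mem_coe, Finset.mem_range, Nat.forall_lt_succ_left,
        mem_inter_iff, bernDigits_succ]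
      rfl
    rw [hpre, volume_bernDigit_inter_bernShift p _
      (measurable_bernDigits p (.pi (Finset.countable_toSet _) fun _ _ => .of_discrete)),
      ih, Finset.prod_range_succ', mul_comm]

theorem map_bernDigits :
    (volume.restrict (Ico 0 1)).map (bernDigits p) =
      infinitePi fun _ : ℕ => Ber(true, false, p) := by
  classical
  refine eq_infinitePi _ fun s t _ => ?_
  obtain ⟨N, hN⟩ := Finset.exists_nat_subset_range s
  have hpi : Set.pi ↑s t = Set.pi ↑(Finset.range N) fun n => if n ∈ s then t n else univ := by
    rw [pi_if, inter_comm, pi_univ, univ_inter]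
    congr 1
    ext n
    simpa using fun h => Finset.mem_range.mp (hN h)
  rw [Measure.map_apply (measurable_bernDigits p)
      (.pi (Finset.countable_toSet _) fun _ _ => .of_discrete),
    hpi, volume_bernDigits_preimage_pi_range]
  simp_rw [apply_ite (Ber(true, false, p) ·), measure_univ]
  rw [Finset.prod_ite_mem, Finset.inter_eq_right.mpr hN]

end BernoulliDigits

theorem infinitePi_map_comp_injective {ι κ X : Type*} [MeasurableSpace X] (μ : Measure X)
    [IsProbabilityMeasure μ] {e : κ → ι} (he : Injective e) :
    (infinitePi fun _ : ι => μ).map (fun f k => f (e k)) = infinitePi fun _ : κ => μ := by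
  classical
  refine eq_infinitePi _ fun s t ht => ?_
  have hpre : (fun f k => f (e k)) ⁻¹' Set.pi ↑s t =
      Set.pi ↑(s.image e) (extend e t fun _ => univ) := by
    ext f
    simp [he.extend_apply]
  rw [Measure.map_apply (by fun_prop) (.pi (Finset.countable_toSet _) fun i _ => ht i), hpre,
    infinitePi_pi _ fun i hi => ?_, Finset.prod_image fun _ _ _ _ h => he h]
  · simp_rw [he.extend_apply]
  · obtain ⟨k, -, rfl⟩ := Finset.mem_image.mp hi
    simpa [he.extend_apply] using ht k

section BernoulliProduct
variable {ι : Type*} (p : I)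

theorem iidBool_eq_infinitePi [Countable ι] :
    iidBool ι p = infinitePi fun _ : ι => Ber(true, false, p) := by
  rw [iidBool, map_bernDigits,
    infinitePi_map_comp_injective _ (Countable.exists_injective_nat ι).choose_spec]

lemma infinitePi_bernoulli_cylinder (s : Finset ι) (g : ι → Bool) :
    infinitePi (fun _ : ι => Ber(true, false, p)) {ω | ∀ i ∈ s, ω i = g i} =
      ∏ i ∈ s, bif g i then ENNReal.ofReal p else ENNReal.ofReal (1 - p) := by
  have : {ω : ι → Bool | ∀ i ∈ s, ω i = g i} = Set.pi ↑s fun i => {g i} := by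
    ext
    simp
  rw [this, infinitePi_pi _ fun _ _ => .of_discrete]
  refine Finset.prod_congr rfl fun i _ => ?_
  rw [bernoulliMeasure_bool_apply]
  cases g i <;> simp

lemma infinitePi_bernoulli_pattern [DecidableEq ι] {O s : Finset ι} (hO : O ⊆ s) :
    infinitePi (fun _ : ι => Ber(true, false, p)) {ω | ∀ i ∈ s, ω i = decide (i ∈ O)} =
      ENNReal.ofReal p ^ O.card * ENNReal.ofReal (1 - p) ^ (s.card - O.card) := by
  rw [infinitePi_bernoulli_cylinder]
  simp_rw [Bool.cond_decide]
  rw [Finset.prod_ite, Finset.filter_mem_eq_inter, Finset.inter_eq_right.mpr hO,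
    Finset.filter_notMem_eq_sdiff, Finset.prod_const, Finset.prod_const,
    Finset.card_sdiff_of_subset hO]

lemma infinitePi_bernoulli_all_true (s : Finset ι) :
    infinitePi (fun _ : ι => Ber(true, false, p)) {ω | ∀ i ∈ s, ω i = true} =
      ENNReal.ofReal p ^ s.card := by
  rw [infinitePi_bernoulli_cylinder p s fun _ => true, Finset.prod_const, cond_true]

end BernoulliProduct

/- The model seen along one coordinate axis: `a : ℤ` stands for the site `a • eᵢ`, the edge `t`
joins `t` and `t + 1`, and `lineMeasure` is the law of site states and segment labels there. -/

abbrev LineCfg := (ℤ → Bool) × (ℤ × ℤ → Bool)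

noncomputable def lineMeasure (p lam : I) : Measure LineCfg :=
  (infinitePi fun _ : ℤ => Ber(true, false, p)).prod
    (infinitePi fun _ : ℤ × ℤ => Ber(true, false, lam))

def LineFeasiblePair (ω : ℤ → Bool) (a b : ℤ) : Prop :=
  ω a = true ∧ ω b = true ∧ ∀ c, a < c → c < b → ω c = false

def LinePairOpen (ζ : LineCfg) (a b : ℤ) : Prop :=
  LineFeasiblePair ζ.1 a b ∧ ζ.2 (a, b) = true

def LineEdgeOpen (ζ : LineCfg) (t : ℤ) : Prop :=
  ∃ a b, a ≤ t ∧ t < b ∧ LinePairOpen ζ a b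

section LineModel
variable {ω : ℤ → Bool} {a b a' b' m t : ℤ}

lemma LineFeasiblePair.eq_of_mem_Ico (h : LineFeasiblePair ω a b)
    (h' : LineFeasiblePair ω a' b') (ht : t ∈ Ico a b) (ht' : t ∈ Ico a' b') :
    a = a' ∧ b = b' := by
  obtain ⟨ha, hb, hgap⟩ := h
  obtain ⟨ha', hb', hgap'⟩ := h'
  obtain ⟨h1, h2⟩ := ht
  obtain ⟨h1', h2'⟩ := ht'
  constructor
  · by_contra hne
    rcases lt_or_gt_of_ne hne with h | h
    · simp [hgap a' h (by omega)] at ha'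
    · simp [hgap' a h (by omega)] at ha
  · by_contra hne
    rcases lt_or_gt_of_ne hne with h | h
    · simp [hgap' b (by omega) h] at hb
    · simp [hgap b' (by omega) h] at hb'

lemma lineFeasiblePair_iff (hab : a < b) :
    LineFeasiblePair ω a b ↔
      ∀ c ∈ Finset.Icc a b, ω c = decide (c ∈ ({a, b} : Finset ℤ)) := by
  simp only [LineFeasiblePair, Finset.mem_Icc, Finset.mem_insert, Finset.mem_singleton]
  constructor
  · rintro ⟨ha, hb, hgap⟩ c ⟨h1, h2⟩
    rcases eq_or_lt_of_le h1 with rfl | h1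
    · simp [ha]
    rcases eq_or_lt_of_le h2 with rfl | h2
    · simp [hb]
    simp [hgap c h1 h2, h1.ne', h2.ne]
  · intro h
    refine ⟨by simpa using h a ⟨le_rfl, hab.le⟩, by simpa using h b ⟨hab.le, le_rfl⟩,
      fun c h1 h2 => ?_⟩
    simpa [h1.ne', h2.ne] using h c ⟨h1.le, h2.le⟩

lemma lineFeasiblePair_and_lineFeasiblePair_iff (ham : a < m) (hmb : m < b) :
    LineFeasiblePair ω a m ∧ LineFeasiblePair ω m b ↔
      ∀ c ∈ Finset.Icc a b, ω c = decide (c ∈ ({a, m, b} : Finset ℤ)) := by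
  simp only [lineFeasiblePair_iff ham, lineFeasiblePair_iff hmb, Finset.mem_Icc,
    Finset.mem_insert, Finset.mem_singleton]
  constructor
  · rintro ⟨h, h'⟩ c ⟨h1, h2⟩
    rcases le_total c m with hc | hc
    · simpa [show c ≠ b by omega] using h c ⟨h1, hc⟩
    · simpa [show c ≠ a by omega] using h' c ⟨hc, h2⟩
  · intro h
    refine ⟨fun c hc => ?_, fun c hc => ?_⟩
    · simpa [show c ≠ b by omega] using h c ⟨hc.1, by omega⟩
    · simpa [show c ≠ a by omega] using h c ⟨by omega, hc.2⟩

lemma measurableSet_linePairOpen (a b : ℤ) :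
    MeasurableSet {ζ : LineCfg | LinePairOpen ζ a b} := by
  unfold LinePairOpen LineFeasiblePair
  measurability

lemma measurableSet_lineEdgeOpen (t : ℤ) : MeasurableSet {ζ : LineCfg | LineEdgeOpen ζ t} := by
  unfold LineEdgeOpen LinePairOpen LineFeasiblePair
  measurability

lemma setOf_lineEdgeOpen (t : ℤ) :
    {ζ | LineEdgeOpen ζ t} = ⋃ mn : ℕ × ℕ, {ζ | LinePairOpen ζ (t - mn.1) (t + 1 + mn.2)} := by
  ext ζ
  simp only [LineEdgeOpen, mem_ofPred_eq, mem_iUnion]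
  constructor
  · rintro ⟨a, b, hat, htb, h⟩
    obtain ⟨m, rfl⟩ : ∃ m : ℕ, a = t - m := ⟨(t - a).toNat, by omega⟩
    obtain ⟨n, rfl⟩ : ∃ n : ℕ, b = t + 1 + n := ⟨(b - t - 1).toNat, by omega⟩
    exact ⟨(m, n), h⟩
  · rintro ⟨mn, h⟩
    exact ⟨_, _, by omega, by omega, h⟩

lemma setOf_lineEdgeOpen_zero_and_one :
    {ζ | LineEdgeOpen ζ 0 ∧ LineEdgeOpen ζ 1} =
      (⋃ mn : ℕ × ℕ, {ζ | LinePairOpen ζ (-mn.1) 1 ∧ LinePairOpen ζ 1 (2 + mn.2)}) ∪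
        ⋃ mn : ℕ × ℕ, {ζ | LinePairOpen ζ (-mn.1) (2 + mn.2)} := by
  ext ζ
  simp only [LineEdgeOpen, mem_ofPred_eq, mem_union, mem_iUnion]
  constructor
  · rintro ⟨⟨a, b, ha, hb, h⟩, ⟨a', b', ha', hb', h'⟩⟩
    obtain ⟨m, rfl⟩ : ∃ m : ℕ, a = -m := ⟨(-a).toNat, by omega⟩
    by_cases h1 : ζ.1 1 = true
    · obtain rfl : b = 1 := by
        by_contra hne
        simp [h.1.2.2 1 (by omega) (by omega)] at h1
      obtain rfl : a' = 1 := by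
        by_contra hne
        simp [h'.1.2.2 1 (by omega) (by omega)] at h1
      obtain ⟨n, rfl⟩ : ∃ n : ℕ, b' = 2 + n := ⟨(b' - 2).toNat, by omega⟩
      exact Or.inl ⟨(m, n), h, h'⟩
    · have hb1 : b ≠ 1 := by
        rintro rfl
        exact h1 h.1.2.1
      obtain ⟨n, rfl⟩ : ∃ n : ℕ, b = 2 + n := ⟨(b - 2).toNat, by omega⟩
      exact Or.inr ⟨(m, n), h⟩
  · rintro (⟨mn, h, h'⟩ | ⟨mn, h⟩)
    · exact ⟨⟨_, _, by omega, by omega, h⟩, ⟨_, _, le_rfl, by omega, h'⟩⟩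
    · exact ⟨⟨_, _, by omega, by omega, h⟩, ⟨_, _, by omega, by omega, h⟩⟩

end LineModel

section LineMeasure
variable (p lam : I) {a b m : ℤ}

lemma lineMeasure_linePairOpen (hab : a < b) :
    lineMeasure p lam {ζ | LinePairOpen ζ a b} =
      ENNReal.ofReal p ^ 2 * ENNReal.ofReal (1 - p) ^ (b - a - 1).toNat *
        ENNReal.ofReal lam := by
  have hset : {ζ : LineCfg | LinePairOpen ζ a b} =
      {ω | ∀ c ∈ Finset.Icc a b, ω c = decide (c ∈ ({a, b} : Finset ℤ))} ×ˢ
        {η | ∀ x ∈ ({(a, b)} : Finset (ℤ × ℤ)), η x = true} := by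
    ext ζ
    simp [LinePairOpen, lineFeasiblePair_iff hab]
  rw [hset, lineMeasure, Measure.prod_prod,
    infinitePi_bernoulli_pattern p (by simp [Finset.insert_subset_iff, hab.le]),
    infinitePi_bernoulli_all_true, Finset.card_pair hab.ne, Int.card_Icc, Finset.card_singleton,
    pow_one, show (b + 1 - a).toNat - 2 = (b - a - 1).toNat by omega]

lemma lineMeasure_linePairOpen_and_linePairOpen (ham : a < m) (hmb : m < b) :
    lineMeasure p lam {ζ | LinePairOpen ζ a m ∧ LinePairOpen ζ m b} =
      ENNReal.ofReal p ^ 3 * ENNReal.ofReal (1 - p) ^ (b - a - 2).toNat *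
        ENNReal.ofReal lam ^ 2 := by
  have hset : {ζ : LineCfg | LinePairOpen ζ a m ∧ LinePairOpen ζ m b} =
      {ω | ∀ c ∈ Finset.Icc a b, ω c = decide (c ∈ ({a, m, b} : Finset ℤ))} ×ˢ
        {η | ∀ x ∈ ({(a, m), (m, b)} : Finset (ℤ × ℤ)), η x = true} := by
    ext ζ
    simp only [LinePairOpen, mem_ofPred_eq, mem_prod,
      ← lineFeasiblePair_and_lineFeasiblePair_iff ham hmb, Finset.forall_mem_insert,
      Finset.mem_singleton, forall_eq]
    tauto
  rw [hset, lineMeasure, Measure.prod_prod,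
    infinitePi_bernoulli_pattern p (by simp [Finset.insert_subset_iff]; omega),
    infinitePi_bernoulli_all_true, Int.card_Icc, Finset.card_pair (by simp; omega),
    Finset.card_insert_of_notMem (by simp; omega), Finset.card_pair (by omega),
    show (b + 1 - a).toNat - (1 + 1 + 1) = (b - a - 2).toNat by omega]

lemma tsum_ofReal_one_sub_pow_add :
    ∑' mn : ℕ × ℕ, ENNReal.ofReal (1 - p) ^ (mn.1 + mn.2) = (ENNReal.ofReal p)⁻¹ ^ 2 := by
  have h : 1 - ENNReal.ofReal (1 - p) = ENNReal.ofReal p := by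
    rw [← ENNReal.ofReal_one, ← ENNReal.ofReal_sub _ (sub_nonneg.mpr p.2.2), sub_sub_self]
  simp_rw [ENNReal.tsum_prod', pow_add, ENNReal.tsum_mul_left, ENNReal.tsum_mul_right,
    ENNReal.tsum_geometric, h, sq]

lemma ofReal_pow_mul_inv_pow {x : ℝ} (hx : 0 < x) (k : ℕ) :
    ENNReal.ofReal x ^ k * (ENNReal.ofReal x)⁻¹ ^ k = 1 := by
  rw [← mul_pow, ENNReal.mul_inv_cancel (ENNReal.ofReal_pos.mpr hx).ne' ENNReal.ofReal_ne_top,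
    one_pow]

theorem lineMeasure_lineEdgeOpen (hp : 0 < (p : ℝ)) (t : ℤ) :
    lineMeasure p lam {ζ | LineEdgeOpen ζ t} = ENNReal.ofReal lam := by
  have hdisj : Pairwise (Disjoint on fun mn : ℕ × ℕ =>
      {ζ | LinePairOpen ζ (t - mn.1) (t + 1 + mn.2)}) := fun mn mn' hne =>
    disjoint_left.mpr fun ζ h h' => hne <| by
      obtain ⟨h1, h2⟩ := h.1.eq_of_mem_Ico h'.1 (t := t) ⟨by omega, by omega⟩ ⟨by omega, by omega⟩
      ext <;> omega
  rw [setOf_lineEdgeOpen, measure_iUnion hdisj fun _ => measurableSet_linePairOpen _ _]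
  calc ∑' mn : ℕ × ℕ, lineMeasure p lam {ζ | LinePairOpen ζ (t - mn.1) (t + 1 + mn.2)}
      = ∑' mn : ℕ × ℕ, ENNReal.ofReal p ^ 2 * ENNReal.ofReal lam *
          ENNReal.ofReal (1 - p) ^ (mn.1 + mn.2) := by
        refine tsum_congr fun mn => ?_
        rw [lineMeasure_linePairOpen _ _ (by omega),
          show (t + 1 + mn.2 - (t - mn.1) - 1).toNat = mn.1 + mn.2 by omega]
        ring
    _ = ENNReal.ofReal lam := by
        rw [ENNReal.tsum_mul_left, tsum_ofReal_one_sub_pow_add, mul_right_comm,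
          ofReal_pow_mul_inv_pow hp, one_mul]

lemma lineMeasure_lineEdgeOpen_zero_and_one_eq_tsum_add_tsum :
    lineMeasure p lam {ζ | LineEdgeOpen ζ 0 ∧ LineEdgeOpen ζ 1} =
      ∑' mn : ℕ × ℕ,
          lineMeasure p lam {ζ | LinePairOpen ζ (-mn.1) 1 ∧ LinePairOpen ζ 1 (2 + mn.2)} +
        ∑' mn : ℕ × ℕ, lineMeasure p lam {ζ | LinePairOpen ζ (-mn.1) (2 + mn.2)} := by
  have hdisj₂ : Pairwise (Disjoint on fun mn : ℕ × ℕ =>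
      {ζ | LinePairOpen ζ (-mn.1) 1 ∧ LinePairOpen ζ 1 (2 + mn.2)}) := fun mn mn' hne =>
    disjoint_left.mpr fun ζ h h' => hne <| by
      obtain ⟨h1, -⟩ := h.1.1.eq_of_mem_Ico h'.1.1 (t := 0) ⟨by omega, by omega⟩
        ⟨by omega, by omega⟩
      obtain ⟨-, h2⟩ := h.2.1.eq_of_mem_Ico h'.2.1 (t := 1) ⟨le_rfl, by omega⟩ ⟨le_rfl, by omega⟩
      ext <;> omega
  have hdisj₁ : Pairwise (Disjoint on fun mn : ℕ × ℕ =>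
      {ζ | LinePairOpen ζ (-mn.1) (2 + mn.2)}) := fun mn mn' hne =>
    disjoint_left.mpr fun ζ h h' => hne <| by
      obtain ⟨h1, h2⟩ := h.1.eq_of_mem_Ico h'.1 (t := 0) ⟨by omega, by omega⟩ ⟨by omega, by omega⟩
      ext <;> omega
  have hdisj : Disjoint
      (⋃ mn : ℕ × ℕ, {ζ | LinePairOpen ζ (-mn.1) 1 ∧ LinePairOpen ζ 1 (2 + mn.2)})
      (⋃ mn : ℕ × ℕ, {ζ | LinePairOpen ζ (-mn.1) (2 + mn.2)}) :=
    disjoint_iUnion_left.mpr fun mn => disjoint_iUnion_right.mpr fun mn' =>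
      disjoint_left.mpr fun ζ h h' => by
        have := (h.1.1.eq_of_mem_Ico h'.1 (t := 0) ⟨by omega, by omega⟩ ⟨by omega, by omega⟩).2
        omega
  rw [setOf_lineEdgeOpen_zero_and_one,
    measure_union hdisj (.iUnion fun _ => measurableSet_linePairOpen _ _),
    measure_iUnion hdisj₂ fun _ => (measurableSet_linePairOpen _ _).inter
      (measurableSet_linePairOpen _ _),
    measure_iUnion hdisj₁ fun _ => measurableSet_linePairOpen _ _]

theorem lineMeasure_lineEdgeOpen_zero_and_one (hp : 0 < (p : ℝ)) :
    lineMeasure p lam {ζ | LineEdgeOpen ζ 0 ∧ LineEdgeOpen ζ 1} =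
      ENNReal.ofReal p * ENNReal.ofReal lam ^ 2 +
        ENNReal.ofReal (1 - p) * ENNReal.ofReal lam := by
  rw [lineMeasure_lineEdgeOpen_zero_and_one_eq_tsum_add_tsum]
  calc ∑' mn : ℕ × ℕ,
          lineMeasure p lam {ζ | LinePairOpen ζ (-mn.1) 1 ∧ LinePairOpen ζ 1 (2 + mn.2)} +
        ∑' mn : ℕ × ℕ, lineMeasure p lam {ζ | LinePairOpen ζ (-mn.1) (2 + mn.2)}
      = ∑' mn : ℕ × ℕ, ENNReal.ofReal p ^ 3 * ENNReal.ofReal lam ^ 2 *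
            ENNReal.ofReal (1 - p) ^ (mn.1 + mn.2) +
          ∑' mn : ℕ × ℕ, ENNReal.ofReal p ^ 2 * ENNReal.ofReal (1 - p) * ENNReal.ofReal lam *
            ENNReal.ofReal (1 - p) ^ (mn.1 + mn.2) := by
        congr 1 <;> refine tsum_congr fun mn => ?_
        · rw [lineMeasure_linePairOpen_and_linePairOpen _ _ (by omega) (by omega),
            show (2 + mn.2 - -(mn.1 : ℤ) - 2).toNat = mn.1 + mn.2 by omega]
          ring
        · rw [lineMeasure_linePairOpen _ _ (by omega),
            show (2 + mn.2 - -(mn.1 : ℤ) - 1).toNat = mn.1 + mn.2 + 1 by omega]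
          ring
    _ = (ENNReal.ofReal p * ENNReal.ofReal lam ^ 2 +
          ENNReal.ofReal (1 - p) * ENNReal.ofReal lam) *
          (ENNReal.ofReal p ^ 2 * (ENNReal.ofReal p)⁻¹ ^ 2) := by
        rw [ENNReal.tsum_mul_left, ENNReal.tsum_mul_left, tsum_ofReal_one_sub_pow_add]
        ring
    _ = _ := by rw [ofReal_pow_mul_inv_pow hp, mul_one]

end LineMeasure

section Axis
variable {d : ℕ}

def line (d : ℕ) (i : Fin d) (a : ℤ) : Site d := seg 0 i a

def lineEdge (i : Fin d) (t : ℤ) : EdgeIdx d := (line d i t, i)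

def lineView (i : Fin d) (ξ : Cfg d) : LineCfg :=
  (fun a => ξ.1 (line d i a), fun ab => ξ.2 (line d i ab.1, line d i ab.2))

@[simp]
lemma line_apply_self (i : Fin d) (a : ℤ) : line d i a i = a := by
  simp [line, seg]

lemma line_apply_of_ne {i j : Fin d} (hj : j ≠ i) (a : ℤ) : line d i a j = 0 := by
  simp [line, seg, Function.update_of_ne hj]

@[simp]
lemma seg_line (i : Fin d) (t a : ℤ) : seg (line d i t) i a = line d i a :=
  Function.update_idem ..

lemma line_injective (i : Fin d) : Injective (line d i) :=
  fun a b h => by simpa using congrFun h i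

lemma edgeOpen_lineEdge_iff (i : Fin d) (ξ : Cfg d) (t : ℤ) :
    EdgeOpen ξ (lineEdge i t) ↔ LineEdgeOpen (lineView i ξ) t := by
  constructor
  · rintro ⟨v, w, ⟨j, -, hlt, hv, hw, hgap⟩, ⟨a, b, hat, htb, rfl, rfl⟩, hlab⟩
    simp only [lineEdge, seg_line, line_apply_self] at *
    obtain rfl : j = i := by
      by_contra hne
      simp [line_apply_of_ne hne] at hlt
    simp only [line_apply_self, seg_line] at hlt hgap
    exact ⟨a, b, hat, htb, ⟨hv, hw, fun c h1 h2 => hgap c h1 h2⟩, hlab⟩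
  · rintro ⟨a, b, hat, htb, ⟨ha, hb, hgap⟩, hlab⟩
    refine ⟨line d i a, line d i b, ⟨i, fun j hj => ?_, ?_, ha, hb, ?_⟩, ⟨a, b, ?_⟩, hlab⟩
    · rw [line_apply_of_ne hj, line_apply_of_ne hj]
    · simpa using hat.trans_lt htb
    · intro c h1 h2
      simp only [line_apply_self, seg_line] at h1 h2 ⊢
      exact hgap c h1 h2
    · simp [lineEdge, hat, htb]

lemma measurable_lineView (i : Fin d) : Measurable (lineView i) := by
  unfold lineView
  fun_prop

theorem map_lineView (i : Fin d) (p lam : I) :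
    (alignMeasure d p lam).map (lineView i) = lineMeasure p lam := by
  have hprod : Injective (Prod.map (line d i) (line d i)) :=
    (line_injective i).prodMap (line_injective i)
  rw [alignMeasure, iidBool_eq_infinitePi, iidBool_eq_infinitePi, lineMeasure,
    ← infinitePi_map_comp_injective _ (line_injective i),
    ← infinitePi_map_comp_injective _ hprod, Measure.map_prod_map _ _ (by fun_prop) (by fun_prop)]
  rfl

lemma measurable_edgeState : Measurable fun ξ : Cfg d => fun e => edgeState ξ e := by
  refine measurable_pi_lambda _ fun e => measurable_to_bool ?_
  have : (fun ξ : Cfg d => edgeState ξ e) ⁻¹' {true} = {ξ | EdgeOpen ξ e} := by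
    ext ξ
    simp [edgeState]
  rw [this]
  unfold EdgeOpen FeasiblePair
  measurability

lemma edgeLaw_eq_lineMeasure (i : Fin d) (p lam : I) {A : Set (BondCfg d)} (hA : MeasurableSet A)
    {S : Set LineCfg} (hS : MeasurableSet S)
    (hAS : (fun ξ e => edgeState ξ e) ⁻¹' A = lineView i ⁻¹' S) :
    edgeLaw d p lam A = lineMeasure p lam S := by
  rw [edgeLaw, Measure.map_apply measurable_edgeState hA, hAS,
    ← Measure.map_apply (measurable_lineView i) hS, map_lineView]

end Axis

section EdgeLaw
variable {d : ℕ} {p lam : ℝ}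

theorem edgeLaw_lineEdge (hp : p ∈ Ioc 0 1) (hlam : lam ∈ Icc 0 1) (i : Fin d) (t : ℤ) :
    edgeLaw d p lam {τ | τ (lineEdge i t) = true} = ENNReal.ofReal lam := by
  rw [edgeLaw_eq_lineMeasure i ⟨p, hp.1.le, hp.2⟩ ⟨lam, hlam⟩
    (A := {τ | τ (lineEdge i t) = true}) (by measurability) (measurableSet_lineEdgeOpen t)
    (by ext ξ; simp [edgeState, edgeOpen_lineEdge_iff]),
    lineMeasure_lineEdgeOpen _ _ hp.1]

theorem edgeLaw_lineEdge_zero_and_one (hp : p ∈ Ioc 0 1) (hlam : lam ∈ Icc 0 1) (i : Fin d) :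
    edgeLaw d p lam {τ | τ (lineEdge i 0) = true ∧ τ (lineEdge i 1) = true} =
      ENNReal.ofReal (lam - p * lam * (1 - lam)) := by
  rw [edgeLaw_eq_lineMeasure i ⟨p, hp.1.le, hp.2⟩ ⟨lam, hlam⟩
    (A := {τ | τ (lineEdge i 0) = true ∧ τ (lineEdge i 1) = true}) (by measurability)
    (S := {ζ | LineEdgeOpen ζ 0 ∧ LineEdgeOpen ζ 1})
    ((measurableSet_lineEdgeOpen 0).inter (measurableSet_lineEdgeOpen 1))
    (by ext ξ; simp [edgeState, edgeOpen_lineEdge_iff]),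
    lineMeasure_lineEdgeOpen_zero_and_one _ _ hp.1,
    show lam - p * lam * (1 - lam) = p * lam ^ 2 + (1 - p) * lam by ring,
    ENNReal.ofReal_add (by have := hp.1; positivity) (mul_nonneg (sub_nonneg.mpr hp.2) hlam.1),
    ENNReal.ofReal_mul hp.1.le, ENNReal.ofReal_mul (sub_nonneg.mpr hp.2),
    ENNReal.ofReal_pow hlam.1]

theorem edgeLaw_lineEdge_zero_or_one (hp : p ∈ Ioc 0 1) (hlam : lam ∈ Icc 0 1) (i : Fin d) :
    edgeLaw d p lam {τ | τ (lineEdge i 0) = true ∨ τ (lineEdge i 1) = true} =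
      ENNReal.ofReal (lam + p * lam * (1 - lam)) := by
  have hunion := measure_union_add_inter (μ := edgeLaw d p lam) {τ | τ (lineEdge i 0) = true}
    (t := {τ | τ (lineEdge i 1) = true}) (by measurability)
  have hinter : edgeLaw d p lam ({τ | τ (lineEdge i 0) = true} ∩ {τ | τ (lineEdge i 1) = true}) =
      ENNReal.ofReal (lam - p * lam * (1 - lam)) := edgeLaw_lineEdge_zero_and_one hp hlam i
  rw [hinter, edgeLaw_lineEdge hp hlam, edgeLaw_lineEdge hp hlam] at hunion
  have hx : 0 ≤ p * lam * (1 - lam) :=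
    mul_nonneg (mul_nonneg hp.1.le hlam.1) (sub_nonneg.mpr hlam.2)
  have hxl : p * lam * (1 - lam) ≤ lam := by
    nlinarith [mul_le_mul_of_nonneg_right hp.2 (mul_nonneg hlam.1 (sub_nonneg.mpr hlam.2)),
      hlam.1]
  have hsum : ENNReal.ofReal (lam + p * lam * (1 - lam)) +
      ENNReal.ofReal (lam - p * lam * (1 - lam)) = ENNReal.ofReal lam + ENNReal.ofReal lam := by
    rw [← ENNReal.ofReal_add (by linarith) (by linarith), ← ENNReal.ofReal_add hlam.1 hlam.1]
    ring_nf
  exact (ENNReal.add_left_inj ENNReal.ofReal_ne_top).mp (hunion.trans hsum.symm)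

theorem strictAntiOn_edgeLaw_lineEdge_zero_and_one (hlam : lam ∈ Ioo 0 1) (i : Fin d) :
    StrictAntiOn
      (fun p => edgeLaw d p lam {τ | τ (lineEdge i 0) = true ∧ τ (lineEdge i 1) = true})
      (Ioc 0 1) := by
  intro p hp q hq hpq
  simp only [edgeLaw_lineEdge_zero_and_one hp (Ioo_subset_Icc_self hlam),
    edgeLaw_lineEdge_zero_and_one hq (Ioo_subset_Icc_self hlam)]
  have := mul_lt_mul_of_pos_right (mul_lt_mul_of_pos_right hpq hlam.1) (sub_pos.mpr hlam.2)
  rw [ENNReal.ofReal_lt_ofReal_iff_of_nonneg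
    (by nlinarith [hq.2, hlam.1, hlam.2, mul_pos hlam.1 hlam.1])]
  linarith

theorem strictMonoOn_edgeLaw_lineEdge_zero_or_one (hlam : lam ∈ Ioo 0 1) (i : Fin d) :
    StrictMonoOn
      (fun p => edgeLaw d p lam {τ | τ (lineEdge i 0) = true ∨ τ (lineEdge i 1) = true})
      (Ioc 0 1) := by
  intro p hp q hq hpq
  simp only [edgeLaw_lineEdge_zero_or_one hp (Ioo_subset_Icc_self hlam),
    edgeLaw_lineEdge_zero_or_one hq (Ioo_subset_Icc_self hlam)]
  have := mul_lt_mul_of_pos_right (mul_lt_mul_of_pos_right hpq hlam.1) (sub_pos.mpr hlam.2)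
  rw [ENNReal.ofReal_lt_ofReal_iff_of_nonneg
    (by nlinarith [hp.1, hlam.1, hlam.2, mul_pos hp.1 hlam.1])]
  linarith

end EdgeLaw

theorem map_apply_le_map_apply_of_ae_le {α β : Type*} [MeasurableSpace α] [MeasurableSpace β]
    [Preorder β] {ν : Measure α} {f g : α → β} (hf : Measurable f) (hg : Measurable g)
    (hfg : ∀ᵐ x ∂ν, f x ≤ g x) {A : Set β} (hA : MeasurableSet A) (hup : IsUpperSet A) :
    ν.map f A ≤ ν.map g A := by
  rw [Measure.map_apply hf hA, Measure.map_apply hg hA]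
  exact measure_mono_ae (hfg.mono fun x hx hxA => hup hx hxA)

lemma isUpperSet_setOf_apply_eq_true {ι : Type*} (i : ι) :
    IsUpperSet {τ : ι → Bool | τ i = true} :=
  fun _ _ hle h => Bool.eq_true_of_true_le (h ▸ hle i)

/-- Fix `d ≥ 2`, `λ ∈ (0,1)` and `0 < p₁ < p₂ ≤ 1`. There is no
monotone coupling of the edge laws at `p₁` and `p₂`, in either direction. -/
theorem no_monotone_coupling (d : ℕ) (hd : 2 ≤ d) (lam : ℝ) (hlam : lam ∈ Set.Ioo (0 : ℝ) 1)
    (p1 p2 : ℝ) (hp1 : 0 < p1) (h12 : p1 < p2) (hp2 : p2 ≤ 1) :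
    (¬ ∃ ν : Measure (BondCfg d × BondCfg d), IsProbabilityMeasure ν ∧
        ν.map Prod.fst = edgeLaw d p1 lam ∧ ν.map Prod.snd = edgeLaw d p2 lam ∧
        ν {q | ∀ e : EdgeIdx d, q.1 e ≤ q.2 e} = 1) ∧
    (¬ ∃ ν : Measure (BondCfg d × BondCfg d), IsProbabilityMeasure ν ∧
        ν.map Prod.fst = edgeLaw d p1 lam ∧ ν.map Prod.snd = edgeLaw d p2 lam ∧
        ν {q | ∀ e : EdgeIdx d, q.2 e ≤ q.1 e} = 1) := by
  have hp1' : p1 ∈ Ioc 0 1 := ⟨hp1, h12.le.trans hp2⟩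
  have hp2' : p2 ∈ Ioc 0 1 := ⟨hp1.trans h12, hp2⟩
  let i : Fin d := ⟨0, by omega⟩
  have hup := isUpperSet_setOf_apply_eq_true (ι := EdgeIdx d)
  constructor
  · rintro ⟨ν, _, h1, h2, hle⟩
    have key := map_apply_le_map_apply_of_ae_le measurable_fst measurable_snd
      ((ae_iff_prob_eq_one (by measurability)).mpr hle)
      (A := {τ | τ (lineEdge i 0) = true ∧ τ (lineEdge i 1) = true}) (by measurability)
      ((hup (lineEdge i 0)).inter (hup (lineEdge i 1)))
    rw [h1, h2] at key
    exact (strictAntiOn_edgeLaw_lineEdge_zero_and_one hlam i hp1' hp2' h12).not_ge key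
  · rintro ⟨ν, _, h1, h2, hle⟩
    have key := map_apply_le_map_apply_of_ae_le measurable_snd measurable_fst
      ((ae_iff_prob_eq_one (by measurability)).mpr hle)
      (A := {τ | τ (lineEdge i 0) = true ∨ τ (lineEdge i 1) = true}) (by measurability)
      ((hup (lineEdge i 0)).union (hup (lineEdge i 1)))
    rw [h1, h2] at key
    exact (strictMonoOn_edgeLaw_lineEdge_zero_or_one hlam i hp1' hp2' h12).not_ge key

end AlignmentPercolation
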